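/- Consistency of the subgroup doubly robust estimator with fixed nuisance functions, at least one correctly specified (Theorem 3, part 1, with the nuisance estimators fixed at their limits): let (Xᵢ, Aᵢ, Yᵢ), i ≥ 1, be i.i.d. copies of (X, A, Y) (with associated potential outcomes satisfying consistency, mean exchangeability and positivity), let w ⊆ 𝒳 be a measurable subgroup with P(X ∈ w) > 0, let e* : 𝒳 → ℝ be measurable with e*(x) ≥ ε for all x (ε > 0), and let g* : 𝒳 → ℝ be measurable with g* ∘ X integrable. Assume that e* = e_a almost everywhere with respect to the law of X, or that g* = m_a almost everywhere with respect to the law of X (where e_a is a version of the propensity score and m_a a version of the outcome regression E[Y | X, A = a]). Then, almost surely, ( Σ_{i=1}^{n} 1{Xᵢ ∈ w} · ( g*(Xᵢ) + 1{Aᵢ = a} · (Yᵢ − g*(Xᵢ)) / e*(Xᵢ) ) ) / ( Σ_{i=1}^{n} 1{Xᵢ ∈ w} ) converges as n → ∞ to E[Y^a | X ∈ w] = (1/P(X ∈ w)) ∫_{{X ∈ w}} Y^a dP. -/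

import Mathlib

open MeasureTheory Filter Topology ProbabilityTheory

/-!
Write `D = {A = a}` and `e*`, `g*` for the working models. Given `X`, the score
`1_w(X) (g*(X) + 1_D (Y - g*(X)) / e*(X))` has conditional mean
`1_w(X) (g* + e (ν - g*) / e*)(X)`: on `D` the observed outcome is `Y^a`, mean exchangeability
replaces it by `ν(X)`, and the propensity score replaces `1_D` by `e(X)`. This is `1_w(X) ν(X)`
as soon as `e* = e` or `g* = ν`, and `g* = m` gives `g* = ν` because positivity forces
`m(X) = ν(X)` almost surely. So the score has mean `∫_{X ∈ w} Y^a`, and the estimator, a ratio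
of two sample means, converges by the strong law of large numbers.
-/

theorem integral_mul_eq_of_forall_setIntegral_eq {Ω : Type*} {m m₀ : MeasurableSpace Ω}
    {μ : Measure Ω} [IsFiniteMeasure μ] (hm : m ≤ m₀) {φ f g : Ω → ℝ}
    (hφ : StronglyMeasurable[m] φ) (hf : Integrable f μ) (hg : Integrable g μ)
    (hφf : Integrable (φ * f) μ) (hφg : Integrable (φ * g) μ)
    (hfg : ∀ s, MeasurableSet[m] s → ∫ x in s, f x ∂μ = ∫ x in s, g x ∂μ) :
    ∫ x, φ x * f x ∂μ = ∫ x, φ x * g x ∂μ := by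
  have hcond : μ[f | m] =ᵐ[μ] μ[g | m] :=
    ae_eq_condExp_of_forall_setIntegral_eq hm hg (fun _ _ _ => integrable_condExp.integrableOn)
      (fun s hs _ => by rw [setIntegral_condExp hm hf hs, hfg s hs])
      stronglyMeasurable_condExp.aestronglyMeasurable
  calc ∫ x, φ x * f x ∂μ = ∫ x, (φ * μ[f | m]) x ∂μ := by
        rw [← integral_condExp hm]
        exact integral_congr_ae (condExp_mul_of_stronglyMeasurable_left hφ hφf hf)
    _ = ∫ x, (φ * μ[g | m]) x ∂μ := integral_congr_ae (hcond.mono fun x hx => by simp [hx])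
    _ = ∫ x, φ x * g x ∂μ := by
        rw [← integral_condExp hm (f := fun x => φ x * g x)]
        exact (integral_congr_ae (condExp_mul_of_stronglyMeasurable_left hφ hφg hg)).symm

section Covariate

variable {Ω 𝒳 : Type*} [MeasurableSpace Ω] [MeasurableSpace 𝒳] {μ : Measure Ω} {X : Ω → 𝒳}

theorem integral_comp_mul_eq_of_forall_setIntegral_preimage_eq [IsFiniteMeasure μ]
    (hX : Measurable X) {φ : 𝒳 → ℝ} (hφ : Measurable φ) {f g : Ω → ℝ}
    (hf : Integrable f μ) (hg : Integrable g μ)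
    (hφf : Integrable (fun ω => φ (X ω) * f ω) μ) (hφg : Integrable (fun ω => φ (X ω) * g ω) μ)
    (hfg : ∀ B, MeasurableSet B → ∫ ω in X ⁻¹' B, f ω ∂μ = ∫ ω in X ⁻¹' B, g ω ∂μ) :
    ∫ ω, φ (X ω) * f ω ∂μ = ∫ ω, φ (X ω) * g ω ∂μ :=
  integral_mul_eq_of_forall_setIntegral_eq hX.comap_le
    (hφ.comp (comap_measurable X)).stronglyMeasurable hf hg hφf hφg
    fun _ ⟨B, hB, hs⟩ => hs ▸ hfg B hB

theorem comp_ae_eq_of_forall_setIntegral_preimage_eq [IsFiniteMeasure μ] (hX : Measurable X)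
    {u v : 𝒳 → ℝ} (hu : Measurable u) (hv : Measurable v)
    (huX : Integrable (fun ω => u (X ω)) μ) (hvX : Integrable (fun ω => v (X ω)) μ)
    (huv : ∀ B, MeasurableSet B → ∫ ω in X ⁻¹' B, u (X ω) ∂μ = ∫ ω in X ⁻¹' B, v (X ω) ∂μ) :
    (fun ω => u (X ω)) =ᵐ[μ] fun ω => v (X ω) :=
  ae_eq_of_forall_setIntegral_eq_of_sigmaFinite' hX.comap_le
    (fun _ _ _ => huX.integrableOn) (fun _ _ _ => hvX.integrableOn)
    (fun _ ⟨B, hB, hs⟩ _ => hs ▸ huv B hB)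
    (hu.comp (comap_measurable X)).aestronglyMeasurable
    (hv.comp (comap_measurable X)).aestronglyMeasurable

theorem setIntegral_preimage_inter_eq_setIntegral_mul_propensity [IsFiniteMeasure μ]
    (hX : Measurable X) {D : Set Ω} (hD : MeasurableSet D) {e : 𝒳 → ℝ} (he : Measurable e)
    (he_le : ∀ᵐ ω ∂μ, ‖e (X ω)‖ ≤ 1)
    (hePS : ∀ B, MeasurableSet B → ∫ ω in X ⁻¹' B, e (X ω) ∂μ = (μ (X ⁻¹' B ∩ D)).toReal)
    {h : 𝒳 → ℝ} (hh : Measurable h) (hhX : Integrable (fun ω => h (X ω)) μ)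
    {B : Set 𝒳} (hB : MeasurableSet B) :
    ∫ ω in X ⁻¹' B ∩ D, h (X ω) ∂μ = ∫ ω in X ⁻¹' B, e (X ω) * h (X ω) ∂μ := by
  have heX : Integrable (fun ω => e (X ω)) μ :=
    (integrable_const 1).mono' (he.comp hX).aestronglyMeasurable he_le
  have hD1 : Integrable (D.indicator fun _ => (1 : ℝ)) μ := (integrable_const 1).indicator hD
  have hmul : (fun ω => h (X ω) * D.indicator (fun _ => (1 : ℝ)) ω)
      = D.indicator fun ω => h (X ω) := by
    ext ω; by_cases hω : ω ∈ D <;> simp [hω]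
  have hcond := integral_comp_mul_eq_of_forall_setIntegral_preimage_eq (μ := μ.restrict (X ⁻¹' B))
    hX hh hD1.integrableOn heX.integrableOn (hmul ▸ (hhX.indicator hD).integrableOn)
    (hhX.integrableOn.mul_bdd heX.aestronglyMeasurable.restrict (ae_restrict_of_ae he_le))
    (fun B' hB' => by
      rw [Measure.restrict_restrict (hX hB'), ← Set.preimage_inter, setIntegral_indicator hD,
        setIntegral_const, hePS _ (hB'.inter hB)]
      simp [measureReal_def])
  rw [hmul, setIntegral_indicator hD] at hcond
  simpa only [mul_comm] using hcond

theorem comp_ae_eq_of_forall_setIntegral_preimage_inter_eq [IsFiniteMeasure μ]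
    (hX : Measurable X) {D : Set Ω} (hD : MeasurableSet D) {e : 𝒳 → ℝ} (he : Measurable e)
    (he_pos : ∀ᵐ ω ∂μ, 0 < e (X ω)) (he_le : ∀ᵐ ω ∂μ, ‖e (X ω)‖ ≤ 1)
    (hePS : ∀ B, MeasurableSet B → ∫ ω in X ⁻¹' B, e (X ω) ∂μ = (μ (X ⁻¹' B ∩ D)).toReal)
    {u v : 𝒳 → ℝ} (hu : Measurable u) (hv : Measurable v)
    (huX : Integrable (fun ω => u (X ω)) μ) (hvX : Integrable (fun ω => v (X ω)) μ)
    (huv : ∀ B, MeasurableSet B →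
      ∫ ω in X ⁻¹' B ∩ D, u (X ω) ∂μ = ∫ ω in X ⁻¹' B ∩ D, v (X ω) ∂μ) :
    (fun ω => u (X ω)) =ᵐ[μ] fun ω => v (X ω) := by
  have heX : AEStronglyMeasurable (fun ω => e (X ω)) μ := (he.comp hX).aestronglyMeasurable
  have hweighted := comp_ae_eq_of_forall_setIntegral_preimage_eq hX (he.mul hu) (he.mul hv)
    (huX.bdd_mul heX he_le) (hvX.bdd_mul heX he_le) fun B hB => by
      simp only [Pi.mul_apply]
      rw [← setIntegral_preimage_inter_eq_setIntegral_mul_propensity hX hD he he_le hePS hu huX hB,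
        ← setIntegral_preimage_inter_eq_setIntegral_mul_propensity hX hD he he_le hePS hv hvX hB,
        huv B hB]
  filter_upwards [hweighted, he_pos] with ω hω hpos
  exact mul_left_cancel₀ hpos.ne' hω

theorem setIntegral_preimage_indicator_sub_eq [IsFiniteMeasure μ] (hX : Measurable X)
    {D : Set Ω} (hD : MeasurableSet D) {e : 𝒳 → ℝ} (he : Measurable e)
    (he_le : ∀ᵐ ω ∂μ, ‖e (X ω)‖ ≤ 1)
    (hePS : ∀ B, MeasurableSet B → ∫ ω in X ⁻¹' B, e (X ω) ∂μ = (μ (X ⁻¹' B ∩ D)).toReal)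
    {Y Ya : Ω → ℝ} (hY : Integrable Y μ) (hYD : ∀ᵐ ω ∂μ, ω ∈ D → Y ω = Ya ω)
    {ν : 𝒳 → ℝ} (hν : Measurable ν) (hνX : Integrable (fun ω => ν (X ω)) μ)
    (hexch : ∀ B, MeasurableSet B →
      ∫ ω in X ⁻¹' B ∩ D, Ya ω ∂μ = ∫ ω in X ⁻¹' B ∩ D, ν (X ω) ∂μ)
    {g : 𝒳 → ℝ} (hg : Measurable g) (hgX : Integrable (fun ω => g (X ω)) μ)
    {B : Set 𝒳} (hB : MeasurableSet B) :
    ∫ ω in X ⁻¹' B, D.indicator (fun ω => Y ω - g (X ω)) ω ∂μ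
      = ∫ ω in X ⁻¹' B, e (X ω) * (ν (X ω) - g (X ω)) ∂μ := by
  rw [setIntegral_indicator hD, integral_sub hY.integrableOn hgX.integrableOn,
    setIntegral_congr_ae ((hX hB).inter hD) (hYD.mono fun ω h hω => h hω.2), hexch B hB,
    ← integral_sub hνX.integrableOn hgX.integrableOn]
  exact setIntegral_preimage_inter_eq_setIntegral_mul_propensity hX hD he he_le hePS
    (hν.sub hg) (hνX.sub hgX) hB

end Covariate

theorem tendsto_div_of_tendsto_div_natCast {u v : ℕ → ℝ} {x y : ℝ}
    (hu : Tendsto (fun n : ℕ => u n / n) atTop (𝓝 x))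
    (hv : Tendsto (fun n : ℕ => v n / n) atTop (𝓝 y)) (hy : y ≠ 0) :
    Tendsto (fun n => u n / v n) atTop (𝓝 (x / y)) := by
  refine (hu.div hv hy).congr' ?_
  filter_upwards [eventually_ne_atTop 0] with n hn
  exact div_div_div_cancel_right₀ (Nat.cast_ne_zero.mpr hn) _ _

section StrongLaw

variable {Ω β : Type*} [MeasurableSpace Ω] [MeasurableSpace β] {μ : Measure Ω}
  {Z : ℕ → Ω → β} {Z' : Ω → β}

theorem ae_tendsto_average_comp_of_iIndepFun (hindep : iIndepFun Z μ)
    (hident : ∀ i, IdentDistrib (Z i) Z' μ μ) {F : β → ℝ} (hF : Measurable F)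
    (hFZ : Integrable (fun ω => F (Z' ω)) μ) :
    ∀ᵐ ω ∂μ, Tendsto (fun n : ℕ => (∑ i ∈ Finset.range n, F (Z i ω)) / n) atTop
      (𝓝 (∫ ω, F (Z' ω) ∂μ)) := by
  have hident0 : ∀ i, IdentDistrib (fun ω => F (Z i ω)) (fun ω => F (Z 0 ω)) μ μ :=
    fun i => ((hident i).trans (hident 0).symm).comp hF
  have hlaw := strong_law_ae_real (fun i ω => F (Z i ω))
    (((hident 0).comp hF).integrable_iff.mpr hFZ)
    (fun i j hij => (hindep.indepFun hij).comp hF hF) hident0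
  have hmean : ∫ ω, F (Z 0 ω) ∂μ = ∫ ω, F (Z' ω) ∂μ := ((hident 0).comp hF).integral_eq
  rwa [hmean] at hlaw

theorem ae_tendsto_sum_div_sum_of_iIndepFun (hindep : iIndepFun Z μ)
    (hident : ∀ i, IdentDistrib (Z i) Z' μ μ) {F G : β → ℝ} (hF : Measurable F)
    (hG : Measurable G) (hFZ : Integrable (fun ω => F (Z' ω)) μ)
    (hGZ : Integrable (fun ω => G (Z' ω)) μ) (hG0 : ∫ ω, G (Z' ω) ∂μ ≠ 0) :
    ∀ᵐ ω ∂μ, Tendsto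
      (fun n => (∑ i ∈ Finset.range n, F (Z i ω)) / ∑ i ∈ Finset.range n, G (Z i ω)) atTop
      (𝓝 ((∫ ω, F (Z' ω) ∂μ) / ∫ ω, G (Z' ω) ∂μ)) := by
  filter_upwards [ae_tendsto_average_comp_of_iIndepFun hindep hident hF hFZ,
    ae_tendsto_average_comp_of_iIndepFun hindep hident hG hGZ] with ω hFω hGω
  exact tendsto_div_of_tendsto_div_natCast hFω hGω hG0

end StrongLaw

theorem ae_eq_potentialOutcome_of_eq {Ω : Type*} [MeasurableSpace Ω] {μ : Measure Ω}
    {A Y Y1 Y0 Ya : Ω → ℝ} {a : ℝ} (ha : a = 0 ∨ a = 1)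
    (hYa : Ya = if a = 1 then Y1 else Y0)
    (hcons : ∀ᵐ ω ∂μ, Y ω = A ω * Y1 ω + (1 - A ω) * Y0 ω) :
    ∀ᵐ ω ∂μ, A ω = a → Y ω = Ya ω := by
  filter_upwards [hcons] with ω hω hωa
  rcases ha with rfl | rfl <;> simp [hω, hωa, hYa]

/-- The augmented inverse-probability-weighted score of an observation `p = (X, A, Y)`. -/
noncomputable def drScore {𝒳 : Type*} (w : Set 𝒳) (g e : 𝒳 → ℝ) (a : ℝ) (p : 𝒳 × ℝ × ℝ) : ℝ :=
  w.indicator 1 p.1 * (g p.1 + ({a} : Set ℝ).indicator 1 p.2.1 * (p.2.2 - g p.1) / e p.1)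

theorem measurable_drScore {𝒳 : Type*} [MeasurableSpace 𝒳] {w : Set 𝒳} (hw : MeasurableSet w)
    {g e : 𝒳 → ℝ} (hg : Measurable g) (he : Measurable e) (a : ℝ) :
    Measurable (drScore w g e a) := by
  have hw1 : Measurable (w.indicator (1 : 𝒳 → ℝ)) := measurable_one.indicator hw
  have ha1 : Measurable (({a} : Set ℝ).indicator (1 : ℝ → ℝ)) :=
    measurable_one.indicator (measurableSet_singleton a)
  unfold drScore
  fun_prop

theorem norm_indicator_inv_le_inv {𝒳 : Type*} {f : 𝒳 → ℝ} {c : ℝ} (hc : 0 < c)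
    (hf : ∀ x, c ≤ f x) (s : Set 𝒳) (x : 𝒳) : ‖s.indicator (fun x => (f x)⁻¹) x‖ ≤ c⁻¹ := by
  refine (norm_indicator_le_norm_self _ x).trans ?_
  rw [norm_inv, Real.norm_of_nonneg (hc.le.trans (hf x))]
  exact inv_anti₀ hc (hf x)

theorem drScore_comp_eq {Ω 𝒳 : Type*} {X : Ω → 𝒳} {A Y : Ω → ℝ} {a : ℝ} {w : Set 𝒳}
    {gstar estar : 𝒳 → ℝ} (ω : Ω) :
    drScore w gstar estar a (X ω, A ω, Y ω)
      = (X ⁻¹' w).indicator (fun ω => gstar (X ω)) ω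
        + w.indicator (fun x => (estar x)⁻¹) (X ω)
          * {ω | A ω = a}.indicator (fun ω => Y ω - gstar (X ω)) ω := by
  by_cases hw : X ω ∈ w <;> by_cases ha : A ω = a <;> simp [drScore, hw, ha, div_eq_inv_mul]

section DoublyRobust

variable {Ω 𝒳 : Type*} [MeasurableSpace Ω] [MeasurableSpace 𝒳] {μ : Measure Ω} {X : Ω → 𝒳}
  {A Y : Ω → ℝ} {a : ℝ} {w : Set 𝒳} {gstar estar : 𝒳 → ℝ}

theorem integrable_drScore_comp [IsFiniteMeasure μ] (hX : Measurable X) (hA : Measurable A)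
    (hY : Integrable Y μ) (hw : MeasurableSet w) (hgX : Integrable (fun ω => gstar (X ω)) μ)
    (hestar : Measurable estar) {ε' : ℝ} (hε' : 0 < ε') (hestar_ge : ∀ x, ε' ≤ estar x) :
    Integrable (fun ω => drScore w gstar estar a (X ω, A ω, Y ω)) μ := by
  simp only [drScore_comp_eq]
  exact (hgX.indicator (hX hw)).add <|
    ((hY.sub hgX).indicator (hA (measurableSet_singleton a))).bdd_mul
      ((hestar.inv.indicator hw).comp hX).aestronglyMeasurable
    (ae_of_all _ fun ω => norm_indicator_inv_le_inv hε' hestar_ge w (X ω))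

theorem integral_drScore_comp_eq [IsFiniteMeasure μ] (hX : Measurable X) (hA : Measurable A)
    (hY : Integrable Y μ) {Ya : Ω → ℝ} (hYD : ∀ᵐ ω ∂μ, A ω = a → Y ω = Ya ω)
    {e : 𝒳 → ℝ} (he : Measurable e) (he_le : ∀ᵐ ω ∂μ, ‖e (X ω)‖ ≤ 1)
    (hePS : ∀ B, MeasurableSet B →
      ∫ ω in X ⁻¹' B, e (X ω) ∂μ = (μ (X ⁻¹' B ∩ {ω | A ω = a})).toReal)
    {ν : 𝒳 → ℝ} (hν : Measurable ν) (hνX : Integrable (fun ω => ν (X ω)) μ)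
    (hexch : ∀ B, MeasurableSet B →
      ∫ ω in X ⁻¹' B ∩ {ω | A ω = a}, Ya ω ∂μ = ∫ ω in X ⁻¹' B ∩ {ω | A ω = a}, ν (X ω) ∂μ)
    (hw : MeasurableSet w) (hgstar : Measurable gstar) (hgX : Integrable (fun ω => gstar (X ω)) μ)
    (hestar : Measurable estar) {ε' : ℝ} (hε' : 0 < ε') (hestar_ge : ∀ x, ε' ≤ estar x)
    (hdr : (∀ᵐ ω ∂μ, estar (X ω) = e (X ω)) ∨ ∀ᵐ ω ∂μ, gstar (X ω) = ν (X ω)) :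
    ∫ ω, drScore w gstar estar a (X ω, A ω, Y ω) ∂μ = ∫ ω in X ⁻¹' w, ν (X ω) ∂μ := by
  have hD : MeasurableSet {ω | A ω = a} := hA (measurableSet_singleton a)
  set φ : 𝒳 → ℝ := w.indicator fun x => (estar x)⁻¹
  have hφ : Measurable φ := hestar.inv.indicator hw
  have hφX : AEStronglyMeasurable (fun ω => φ (X ω)) μ := (hφ.comp hX).aestronglyMeasurable
  have hφ_le : ∀ᵐ ω ∂μ, ‖φ (X ω)‖ ≤ ε'⁻¹ :=
    ae_of_all _ fun ω => norm_indicator_inv_le_inv hε' hestar_ge w (X ω)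
  have hgw : Integrable ((X ⁻¹' w).indicator fun ω => gstar (X ω)) μ := hgX.indicator (hX hw)
  have hres : Integrable ({ω | A ω = a}.indicator fun ω => Y ω - gstar (X ω)) μ :=
    (hY.sub hgX).indicator hD
  have hfit : Integrable (fun ω => e (X ω) * (ν (X ω) - gstar (X ω))) μ :=
    (hνX.sub hgX).bdd_mul (he.comp hX).aestronglyMeasurable he_le
  have hφres := hres.bdd_mul hφX hφ_le
  have hφfit := hfit.bdd_mul hφX hφ_le
  have hcond := integral_comp_mul_eq_of_forall_setIntegral_preimage_eq hX hφ hres hfit hφres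
    hφfit fun B hB => setIntegral_preimage_indicator_sub_eq hX hD he he_le hePS hY hYD hν hνX
      hexch hgstar hgX hB
  have hdr_pt : ∀ᵐ ω ∂μ, (X ⁻¹' w).indicator (fun ω => gstar (X ω)) ω
      + φ (X ω) * (e (X ω) * (ν (X ω) - gstar (X ω)))
        = (X ⁻¹' w).indicator (fun ω => ν (X ω)) ω := by
    rcases hdr with hdr | hdr <;> filter_upwards [hdr] with ω hω <;>
      by_cases hwω : X ω ∈ w <;>
      simp only [φ, Set.mem_preimage, hwω, hω, Set.indicator_of_mem, Set.indicator_of_notMem,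
        not_false_eq_true, sub_self, zero_mul, mul_zero, add_zero]
    rw [inv_mul_cancel_left₀ (hω ▸ (hε'.trans_le (hestar_ge _)).ne'), add_sub_cancel]
  calc ∫ ω, drScore w gstar estar a (X ω, A ω, Y ω) ∂μ
      = ∫ ω, (X ⁻¹' w).indicator (fun ω => gstar (X ω)) ω ∂μ
        + ∫ ω, φ (X ω) * {ω | A ω = a}.indicator (fun ω => Y ω - gstar (X ω)) ω ∂μ := by
        simp only [drScore_comp_eq]; exact integral_add hgw hφres
    _ = ∫ ω, (X ⁻¹' w).indicator (fun ω => gstar (X ω)) ω ∂μ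
        + ∫ ω, φ (X ω) * (e (X ω) * (ν (X ω) - gstar (X ω))) ∂μ := by rw [hcond]
    _ = ∫ ω in X ⁻¹' w, ν (X ω) ∂μ := by
        rw [← integral_add hgw hφfit, integral_congr_ae hdr_pt, integral_indicator (hX hw)]

end DoublyRobust

theorem dr_estimator_consistency_general
    {Ω : Type*} [MeasurableSpace Ω] (P : Measure Ω) [IsProbabilityMeasure P]
    {𝒳 : Type*} [MeasurableSpace 𝒳]
    (X : Ω → 𝒳) (hX : Measurable X)
    (A : Ω → ℝ) (hA : Measurable A)
    (Y : Ω → ℝ) (hYint : Integrable Y P)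
    (a : ℝ) (ha : a = 0 ∨ a = 1)
    (Y1 Y0 : Ω → ℝ)
    (Ya : Ω → ℝ) (hYa : Ya = if a = 1 then Y1 else Y0)
    -- consistency of potential outcomes
    (hcons : ∀ᵐ ω ∂P, Y ω = A ω * Y1 ω + (1 - A ω) * Y0 ω)
    -- a version of the propensity score
    (e : 𝒳 → ℝ) (he : Measurable e)
    (hePS : ∀ B : Set 𝒳, MeasurableSet B →
      ∫ ω in X ⁻¹' B, e (X ω) ∂P = (P (X ⁻¹' B ∩ {ω | A ω = a})).toReal)
    -- a version of the outcome regression E[Y | X, A = a]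
    (m : 𝒳 → ℝ) (hm : Measurable m)
    (hmint : Integrable (fun ω => m (X ω)) P)
    (hmOR : ∀ B : Set 𝒳, MeasurableSet B →
      ∫ ω in X ⁻¹' B ∩ {ω | A ω = a}, Y ω ∂P
        = ∫ ω in X ⁻¹' B ∩ {ω | A ω = a}, m (X ω) ∂P)
    -- a version of E[Y^a | X]
    (ν : 𝒳 → ℝ) (hν : Measurable ν)
    (hνint : Integrable (fun ω => ν (X ω)) P)
    (hνCE : ∀ B : Set 𝒳, MeasurableSet B →
      ∫ ω in X ⁻¹' B, Ya ω ∂P = ∫ ω in X ⁻¹' B, ν (X ω) ∂P)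
    -- mean exchangeability
    (hexch : ∀ B : Set 𝒳, MeasurableSet B →
      ∫ ω in X ⁻¹' B ∩ {ω | A ω = a}, Ya ω ∂P
        = ∫ ω in X ⁻¹' B ∩ {ω | A ω = a}, ν (X ω) ∂P)
    -- positivity
    (ε : ℝ) (hε : 0 < ε)
    (hpos : ∀ᵐ ω ∂P, ε ≤ e (X ω) ∧ e (X ω) ≤ 1 - ε)
    -- fixed (possibly misspecified) nuisance functions
    (estar : 𝒳 → ℝ) (hestar : Measurable estar)
    (ε' : ℝ) (hε' : 0 < ε') (hestarpos : ∀ x, ε' ≤ estar x)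
    (gstar : 𝒳 → ℝ) (hgstar : Measurable gstar)
    (hgstarint : Integrable (fun ω => gstar (X ω)) P)
    -- at least one nuisance function correctly specified (a.e. w.r.t. the law of X)
    (hdr : (∀ᵐ x ∂(P.map X), estar x = e x) ∨ (∀ᵐ x ∂(P.map X), gstar x = m x))
    -- the subgroup, with P(X ∈ w) > 0
    (w : Set 𝒳) (hw : MeasurableSet w)
    (hwpos : 0 < (P (X ⁻¹' w)).toReal)
    -- i.i.d. copies of (X, A, Y)
    (Xs : ℕ → Ω → 𝒳) (As : ℕ → Ω → ℝ) (Ys : ℕ → Ω → ℝ)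
    (hindep : ProbabilityTheory.iIndepFun
      (fun i ω => (Xs i ω, As i ω, Ys i ω)) P)
    (hident : ∀ i, ProbabilityTheory.IdentDistrib
      (fun ω => (Xs i ω, As i ω, Ys i ω)) (fun ω => (X ω, A ω, Y ω)) P P) :
    ∀ᵐ ω ∂P, Tendsto (fun n : ℕ =>
        (∑ i ∈ Finset.range n,
            (Xs i ⁻¹' w).indicator
              (fun ω' => gstar (Xs i ω')
                + ({ω'' | As i ω'' = a}).indicator
                    (fun ω'' => (Ys i ω'' - gstar (Xs i ω'')) / estar (Xs i ω'')) ω') ω)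
          / (∑ i ∈ Finset.range n, (Xs i ⁻¹' w).indicator (fun _ => (1 : ℝ)) ω))
      atTop
      (𝓝 ((1 / (P (X ⁻¹' w)).toReal) * ∫ ω' in X ⁻¹' w, Ya ω' ∂P)) := by
  have hD : MeasurableSet {ω | A ω = a} := hA (measurableSet_singleton a)
  have hYD := ae_eq_potentialOutcome_of_eq (μ := P) ha hYa hcons
  have he_pos : ∀ᵐ ω ∂P, 0 < e (X ω) := hpos.mono fun ω h => hε.trans_le h.1
  have he_le : ∀ᵐ ω ∂P, ‖e (X ω)‖ ≤ 1 := hpos.mono fun ω h => by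
    rw [Real.norm_eq_abs, abs_le]; constructor <;> linarith [h.1, h.2]
  have hmν : (fun ω => m (X ω)) =ᵐ[P] fun ω => ν (X ω) :=
    comp_ae_eq_of_forall_setIntegral_preimage_inter_eq hX hD he he_pos he_le hePS hm hν hmint
      hνint fun B hB => by
        rw [← hmOR B hB, ← hexch B hB]
        exact setIntegral_congr_ae ((hX hB).inter hD) (hYD.mono fun ω h hω => h hω.2)
  have hdr' : (∀ᵐ ω ∂P, estar (X ω) = e (X ω)) ∨ ∀ᵐ ω ∂P, gstar (X ω) = ν (X ω) :=
    hdr.imp (ae_of_ae_map hX.aemeasurable) fun h =>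
      (ae_of_ae_map hX.aemeasurable h).and hmν |>.mono fun _ h => h.1.trans h.2
  have hmean : ∫ ω, drScore w gstar estar a (X ω, A ω, Y ω) ∂P = ∫ ω in X ⁻¹' w, Ya ω ∂P :=
    (integral_drScore_comp_eq hX hA hYint hYD he he_le hePS hν hνint hexch hw hgstar hgstarint
      hestar hε' hestarpos hdr').trans (hνCE w hw).symm
  have hprob : ∫ ω, w.indicator 1 (X ω) ∂P = (P (X ⁻¹' w)).toReal := by
    rw [← measureReal_def, ← integral_indicator_one (hX hw)]
    rfl
  have hlim := ae_tendsto_sum_div_sum_of_iIndepFun hindep hident (G := fun p => w.indicator 1 p.1)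
    (measurable_drScore hw hgstar hestar a) ((measurable_one.indicator hw).comp measurable_fst)
    (integrable_drScore_comp hX hA hYint hw hgstarint hestar hε' hestarpos)
    ((integrable_const 1).indicator (hX hw)) (hprob ▸ hwpos.ne')
  rw [hmean, hprob, ← one_div_mul_eq_div] at hlim
  filter_upwards [hlim] with ω hω
  convert hω using 3 <;> refine Finset.sum_congr rfl fun i _ => ?_ <;>
    by_cases hwi : Xs i ω ∈ w <;> by_cases hai : As i ω = a <;> simp [drScore, hwi, hai]

/-- Consistency of the subgroup doubly robust estimator with fixed
nuisance functions, at least one correctly specified: the ratio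
`(Σᵢ 1{Xᵢ ∈ w}(g*(Xᵢ) + 1{Aᵢ = a}(Yᵢ − g*(Xᵢ))/e*(Xᵢ))) / (Σᵢ 1{Xᵢ ∈ w})`
converges almost surely to `E[Y^a | X ∈ w]`. -/
theorem dr_estimator_consistency
    {Ω : Type*} [MeasurableSpace Ω] (P : Measure Ω) [IsProbabilityMeasure P]
    {𝒳 : Type*} [MeasurableSpace 𝒳]
    (X : Ω → 𝒳) (hX : Measurable X)
    (A : Ω → ℝ) (hA : Measurable A) (hA01 : ∀ ω, A ω = 0 ∨ A ω = 1)
    (Y : Ω → ℝ) (hY : Measurable Y) (hYint : Integrable Y P)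
    (a : ℝ) (ha : a = 0 ∨ a = 1)
    (Y1 Y0 : Ω → ℝ) (hY1m : Measurable Y1) (hY0m : Measurable Y0)
    (hY1int : Integrable Y1 P) (hY0int : Integrable Y0 P)
    (Ya : Ω → ℝ) (hYa : Ya = if a = 1 then Y1 else Y0)
    -- consistency of potential outcomes
    (hcons : ∀ᵐ ω ∂P, Y ω = A ω * Y1 ω + (1 - A ω) * Y0 ω)
    -- a version of the propensity score
    (e : 𝒳 → ℝ) (he : Measurable e)
    (hePS : ∀ B : Set 𝒳, MeasurableSet B →
      ∫ ω in X ⁻¹' B, e (X ω) ∂P = (P (X ⁻¹' B ∩ {ω | A ω = a})).toReal)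
    -- a version of the outcome regression E[Y | X, A = a]
    (m : 𝒳 → ℝ) (hm : Measurable m)
    (hmint : Integrable (fun ω => m (X ω)) P)
    (hmOR : ∀ B : Set 𝒳, MeasurableSet B →
      ∫ ω in X ⁻¹' B ∩ {ω | A ω = a}, Y ω ∂P
        = ∫ ω in X ⁻¹' B ∩ {ω | A ω = a}, m (X ω) ∂P)
    -- a version of E[Y^a | X]
    (ν : 𝒳 → ℝ) (hν : Measurable ν)
    (hνint : Integrable (fun ω => ν (X ω)) P)
    (hνCE : ∀ B : Set 𝒳, MeasurableSet B →
      ∫ ω in X ⁻¹' B, Ya ω ∂P = ∫ ω in X ⁻¹' B, ν (X ω) ∂P)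
    -- mean exchangeability
    (hexch : ∀ B : Set 𝒳, MeasurableSet B →
      ∫ ω in X ⁻¹' B ∩ {ω | A ω = a}, Ya ω ∂P
        = ∫ ω in X ⁻¹' B ∩ {ω | A ω = a}, ν (X ω) ∂P)
    -- positivity
    (ε : ℝ) (hε : 0 < ε)
    (hpos : ∀ᵐ ω ∂P, ε ≤ e (X ω) ∧ e (X ω) ≤ 1 - ε)
    -- fixed (possibly misspecified) nuisance functions
    (estar : 𝒳 → ℝ) (hestar : Measurable estar)
    (ε' : ℝ) (hε' : 0 < ε') (hestarpos : ∀ x, ε' ≤ estar x)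
    (gstar : 𝒳 → ℝ) (hgstar : Measurable gstar)
    (hgstarint : Integrable (fun ω => gstar (X ω)) P)
    -- at least one nuisance function correctly specified (a.e. w.r.t. the law of X)
    (hdr : (∀ᵐ x ∂(P.map X), estar x = e x) ∨ (∀ᵐ x ∂(P.map X), gstar x = m x))
    -- the subgroup, with P(X ∈ w) > 0
    (w : Set 𝒳) (hw : MeasurableSet w)
    (hwpos : 0 < (P (X ⁻¹' w)).toReal)
    -- i.i.d. copies of (X, A, Y)
    (Xs : ℕ → Ω → 𝒳) (As : ℕ → Ω → ℝ) (Ys : ℕ → Ω → ℝ)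
    (hmeas : ∀ i, Measurable (fun ω => (Xs i ω, As i ω, Ys i ω)))
    (hindep : ProbabilityTheory.iIndepFun
      (fun i ω => (Xs i ω, As i ω, Ys i ω)) P)
    (hident : ∀ i, ProbabilityTheory.IdentDistrib
      (fun ω => (Xs i ω, As i ω, Ys i ω)) (fun ω => (X ω, A ω, Y ω)) P P) :
    ∀ᵐ ω ∂P, Tendsto (fun n : ℕ =>
        (∑ i ∈ Finset.range n,
            (Xs i ⁻¹' w).indicator
              (fun ω' => gstar (Xs i ω')
                + ({ω'' | As i ω'' = a}).indicator
                    (fun ω'' => (Ys i ω'' - gstar (Xs i ω'')) / estar (Xs i ω'')) ω') ω)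
          / (∑ i ∈ Finset.range n, (Xs i ⁻¹' w).indicator (fun _ => (1 : ℝ)) ω))
      atTop
      (𝓝 ((1 / (P (X ⁻¹' w)).toReal) * ∫ ω' in X ⁻¹' w, Ya ω' ∂P)) :=
  dr_estimator_consistency_general P X hX A hA Y hYint a ha Y1 Y0 Ya hYa hcons e he hePS m hm hmint
    hmOR ν hν hνint hνCE hexch ε hε hpos estar hestar ε' hε' hestarpos gstar hgstar hgstarint hdr w
    hw hwpos Xs As Ys hindep hident
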